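/- Let (B^1,i^1,j^1) be a stable ADHM datum on (V^1,W) and (B^2,i^2,j^2) an ADHM datum on (V^2,W) with dim V^1_k = dim V^2_k for every k ∈ I. Then every intertwiner ξ from (B^1,i^1,j^1) to (B^2,i^2,j^2) is an isomorphism (each ξ_k is bijective), and consequently ξ, viewed as an element of ∏_k GL-type isomorphisms, conjugates the data: B^2_h = ξ_{in(h)}∘B^1_h∘ξ_{out(h)}^{-1} for all h, i^2_k = ξ_k∘i^1_k and j^2_k = j^1_k∘ξ_k^{-1} for all k. (This is the fact that the zero locus of the tautological section used in the decomposition of the diagonal is exactly the diagonal of the quiver variety.) -/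

import Mathlib

noncomputable section

/-- The data of a finite graph without edge loops, presented by its set `H` of oriented
edges over the vertex set `I`: source and target maps `src`, `tgt`, and a fixed-point-free
orientation-reversing involution `bar`. -/
structure GraphData (I H : Type) where
  src : H → I
  tgt : H → I
  bar : H → H
  bar_invol : ∀ h, bar (bar h) = h
  bar_ne_self : ∀ h, bar h ≠ h
  src_bar : ∀ h, src (bar h) = tgt h
  tgt_bar : ∀ h, tgt (bar h) = src h
  no_loops : ∀ h, src h ≠ tgt h

/-- Transport of the fibres of a family of normed spaces along an equality of indices. -/
def vCast {I : Type} (V : I → Type)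
    [∀ k, NormedAddCommGroup (V k)] [∀ k, NormedSpace ℂ (V k)]
    {k l : I} (e : k = l) : V k ≃L[ℂ] V l := by
  subst e
  exact ContinuousLinearEquiv.refl ℂ (V k)

/-- Stability of an ADHM datum `(B, i, j)`: the only family of subspaces `S k ⊆ V k`
which is `B`-invariant and contained in `ker (j k)` is the zero family. -/
def IsStable {I H : Type} (G : GraphData I H) (V W : I → Type)
    [∀ k, NormedAddCommGroup (V k)] [∀ k, NormedSpace ℂ (V k)]
    [∀ k, NormedAddCommGroup (W k)] [∀ k, NormedSpace ℂ (W k)]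
    (B : ∀ h : H, V (G.src h) →L[ℂ] V (G.tgt h))
    (j : ∀ k : I, V k →L[ℂ] W k) : Prop :=
  ∀ S : ∀ k : I, Submodule ℂ (V k),
    (∀ h : H, ∀ x ∈ S (G.src h), B h x ∈ S (G.tgt h)) →
    (∀ k : I, ∀ x ∈ S k, j k x = 0) →
    ∀ k : I, S k = ⊥

/-- An intertwiner `ξ` from the ADHM datum `(B¹, i¹, j¹)` on `(V¹, W)` to the ADHM datum
`(B², i², j²)` on `(V², W)`. -/
def IsIntertwiner {I H : Type} (G : GraphData I H) (V1 V2 W : I → Type)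
    [∀ k, NormedAddCommGroup (V1 k)] [∀ k, NormedSpace ℂ (V1 k)]
    [∀ k, NormedAddCommGroup (V2 k)] [∀ k, NormedSpace ℂ (V2 k)]
    [∀ k, NormedAddCommGroup (W k)] [∀ k, NormedSpace ℂ (W k)]
    (B1 : ∀ h : H, V1 (G.src h) →L[ℂ] V1 (G.tgt h))
    (i1 : ∀ k : I, W k →L[ℂ] V1 k) (j1 : ∀ k : I, V1 k →L[ℂ] W k)
    (B2 : ∀ h : H, V2 (G.src h) →L[ℂ] V2 (G.tgt h))
    (i2 : ∀ k : I, W k →L[ℂ] V2 k) (j2 : ∀ k : I, V2 k →L[ℂ] W k)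
    (ξ : ∀ k : I, V1 k →L[ℂ] V2 k) : Prop :=
  (∀ h : H, (ξ (G.tgt h)).comp (B1 h) = (B2 h).comp (ξ (G.src h))) ∧
  (∀ k : I, (ξ k).comp (i1 k) = i2 k) ∧
  (∀ k : I, j1 k = (j2 k).comp (ξ k))

/-- If `(B¹,i¹,j¹)` is stable and `dim V¹_k = dim V²_k` for all `k`,
then every intertwiner `ξ` to `(B²,i²,j²)` is bijective, and consequently `ξ` conjugates
the data: `B²_h = ξ∘B¹_h∘ξ⁻¹`, `i²_k = ξ_k∘i¹_k`, `j²_k = j¹_k∘ξ_k⁻¹`. -/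
theorem statement11
    {I H : Type} [Fintype I] [Fintype H] [DecidableEq I]
    (G : GraphData I H) (V1 V2 W : I → Type)
    [∀ k, NormedAddCommGroup (V1 k)] [∀ k, NormedSpace ℂ (V1 k)]
    [∀ k, FiniteDimensional ℂ (V1 k)]
    [∀ k, NormedAddCommGroup (V2 k)] [∀ k, NormedSpace ℂ (V2 k)]
    [∀ k, FiniteDimensional ℂ (V2 k)]
    [∀ k, NormedAddCommGroup (W k)] [∀ k, NormedSpace ℂ (W k)]
    [∀ k, FiniteDimensional ℂ (W k)]
    (B1 : ∀ h : H, V1 (G.src h) →L[ℂ] V1 (G.tgt h))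
    (i1 : ∀ k : I, W k →L[ℂ] V1 k) (j1 : ∀ k : I, V1 k →L[ℂ] W k)
    (B2 : ∀ h : H, V2 (G.src h) →L[ℂ] V2 (G.tgt h))
    (i2 : ∀ k : I, W k →L[ℂ] V2 k) (j2 : ∀ k : I, V2 k →L[ℂ] W k)
    (hst : IsStable G V1 W B1 j1)
    (hdim : ∀ k : I, Module.finrank ℂ (V1 k) = Module.finrank ℂ (V2 k))
    (ξ : ∀ k : I, V1 k →L[ℂ] V2 k)
    (hξ : IsIntertwiner G V1 V2 W B1 i1 j1 B2 i2 j2 ξ) :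
    (∀ k : I, Function.Bijective (ξ k)) ∧
    ∃ e : ∀ k : I, V1 k ≃L[ℂ] V2 k,
      (∀ k : I, ∀ x : V1 k, e k x = ξ k x) ∧
      (∀ h : H, B2 h = ((e (G.tgt h) : V1 (G.tgt h) →L[ℂ] V2 (G.tgt h)).comp
        (B1 h)).comp ((e (G.src h)).symm : V2 (G.src h) →L[ℂ] V1 (G.src h))) ∧
      (∀ k : I, i2 k = (e k : V1 k →L[ℂ] V2 k).comp (i1 k)) ∧
      (∀ k : I, j2 k = (j1 k).comp ((e k).symm : V2 k →L[ℂ] V1 k)) := by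
  obtain ⟨hB, hi, hj⟩ := hξ
  have hinj : ∀ k, Function.Injective (ξ k) := by
    have hker : ∀ k, LinearMap.ker (ξ k : V1 k →ₗ[ℂ] V2 k) = ⊥ := by
      apply hst
      · intro h x hx
        have : (ξ (G.tgt h)) (B1 h x) = (B2 h) (ξ (G.src h) x) :=
          congrFun (congrArg (fun f => f.toFun) (hB h)) x
        simp only [LinearMap.mem_ker, ContinuousLinearMap.coe_coe] at hx ⊢
        rw [this, hx, map_zero]
      · intro k x hx
        simp only [LinearMap.mem_ker, ContinuousLinearMap.coe_coe] at hx
        have : j1 k x = (j2 k) (ξ k x) :=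
          congrFun (congrArg (fun f => f.toFun) (hj k)) x
        rw [this, hx, map_zero]
    intro k
    exact LinearMap.ker_eq_bot.mp (hker k)
  have hbij : ∀ k, Function.Bijective (ξ k) := fun k =>
    ⟨hinj k, (LinearMap.injective_iff_surjective_of_finrank_eq_finrank (hdim k)).mp (hinj k)⟩
  refine ⟨hbij, ?_⟩
  let eL : ∀ k, V1 k ≃ₗ[ℂ] V2 k := fun k =>
    LinearEquiv.ofBijective ((ξ k) : V1 k →ₗ[ℂ] V2 k) (hbij k)
  let e : ∀ k, V1 k ≃L[ℂ] V2 k := fun k => (eL k).toContinuousLinearEquiv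
  have he : ∀ k, ∀ x : V1 k, e k x = ξ k x := fun k x => rfl
  refine ⟨e, he, ?_, ?_, ?_⟩
  · intro h
    ext y
    obtain ⟨x, rfl⟩ := (hbij (G.src h)).2 y
    have h1 : (ξ (G.tgt h)) (B1 h x) = (B2 h) (ξ (G.src h) x) :=
      congrFun (congrArg (fun f => f.toFun) (hB h)) x
    have h2 : (e (G.src h)).symm (ξ (G.src h) x) = x := by
      apply (hbij (G.src h)).1
      rw [← he (G.src h), ← he (G.src h)]
      exact (e (G.src h)).apply_symm_apply _
    simp only [ContinuousLinearMap.comp_apply, ContinuousLinearEquiv.coe_coe]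
    rw [h2, he (G.tgt h)]
    exact h1.symm
  · intro k
    ext w
    simp only [ContinuousLinearMap.comp_apply, ContinuousLinearEquiv.coe_coe, he]
    exact (congrFun (congrArg (fun f => f.toFun) (hi k)) w).symm
  · intro k
    ext y
    obtain ⟨x, rfl⟩ := (hbij k).2 y
    have h2 : (e k).symm (ξ k x) = x := by
      apply (hbij k).1
      rw [← he k, ← he k]
      exact (e k).apply_symm_apply _
    simp only [ContinuousLinearMap.comp_apply, ContinuousLinearEquiv.coe_coe]
    rw [h2]
    exact (congrFun (congrArg (fun f => f.toFun) (hj k)) x).symm
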